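/- Let λ : V → ℝ be logits on a finite vocabulary V with |V| ≥ 2, let (U_v) be i.i.d. standard Gumbel variables, and let X = argmax_v (λ(v) + U_v). Condition on the observation X = x. Then for any alternative logits λ' : V → ℝ, the counterfactual probability P(argmax_v (λ'(v) + U_v) = x | X = x) is at least the interventional probability P(argmax_v (λ'(v) + U_v) = x), i.e., the Gumbel-max counterfactual never decreases the probability of the observed token. -/

import Mathlib

/-!
Write each event as `{u | u v < u x + c v for all v ≠ x}`, with margins `c v = λ x - λ v`.
Given `U x = t`, the other coordinates are independent, so the event has conditional
probability `∏_{v ≠ x} F (t + c v)` (with `F` the distribution function), a nondecreasing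
function of `t`; the intersection of two such events is the event for the margins `min a b`,
whose conditional probability dominates the product of the two. Chebyshev's integral inequality
for two monotone functions of `U x` then gives `P(A) P(B) ≤ P(A ∩ B)`, which is the claim after
dividing by `P(B)`.
-/

open MeasureTheory

/-- The standard Gumbel measure on ℝ, with density exp(−u − exp(−u)). -/
noncomputable def gumbelMeasure : Measure ℝ :=
  volume.withDensity fun u => ENNReal.ofReal (Real.exp (-u - Real.exp (-u)))

open Set
open scoped ENNReal

lemma lintegral_ofReal_exp_neg_Ioi_zero :
    ∫⁻ t in Ioi (0 : ℝ), ENNReal.ofReal (Real.exp (-t)) = 1 := by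
  rw [← ofReal_integral_eq_lintegral_ofReal, integral_exp_neg_Ioi_zero, ENNReal.ofReal_one]
  · simpa using (exp_neg_integrableOn_Ioi 0 one_pos).integrable
  · exact Filter.Eventually.of_forall fun t => (Real.exp_pos _).le

instance isProbabilityMeasure_gumbelMeasure : IsProbabilityMeasure gumbelMeasure := by
  constructor
  have hderiv : ∀ u ∈ univ, HasDerivWithinAt (fun u => Real.exp (-u)) (-Real.exp (-u)) univ u :=
    fun u _ => by simpa using (hasDerivAt_neg u).exp
  have hinj : InjOn (fun u => Real.exp (-u)) univ :=
    fun u _ v _ h => neg_injective (Real.exp_injective h)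
  have himage : (fun u => Real.exp (-u)) '' univ = Ioi 0 := by
    rw [show (fun u => Real.exp (-u)) = Real.exp ∘ Neg.neg from rfl, image_univ, range_comp,
      neg_surjective.range_eq, image_univ, Real.range_exp]
  calc gumbelMeasure univ
      = ∫⁻ u in univ,
          ENNReal.ofReal |-Real.exp (-u)| * ENNReal.ofReal (Real.exp (-Real.exp (-u))) := by
        rw [gumbelMeasure, withDensity_apply _ MeasurableSet.univ]
        refine lintegral_congr fun u => ?_
        rw [abs_neg, abs_of_pos (Real.exp_pos _), ← ENNReal.ofReal_mul (Real.exp_pos _).le,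
          ← Real.exp_add, sub_eq_add_neg]
    _ = ∫⁻ t in Ioi 0, ENNReal.ofReal (Real.exp (-t)) := by
        rw [← himage, lintegral_image_eq_lintegral_abs_deriv_mul MeasurableSet.univ hderiv hinj]
    _ = 1 := lintegral_ofReal_exp_neg_Ioi_zero

lemma mul_add_mul_le_mul_add_mul_of_canonicallyOrderedAdd {R : Type*} [Semiring R]
    [PartialOrder R] [CanonicallyOrderedAdd R] [MulPosMono R] [AddLeftMono R] {a b c d : R}
    (hab : a ≤ b) (hcd : c ≤ d) : a * d + b * c ≤ a * c + b * d := by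
  obtain ⟨e, rfl⟩ := exists_add_of_le hcd
  calc a * (c + e) + b * c = a * c + b * c + a * e := by rw [mul_add, add_right_comm]
    _ ≤ a * c + b * c + b * e := add_le_add_right (mul_le_mul_of_nonneg_right hab zero_le) _
    _ = a * c + b * (c + e) := by rw [mul_add, add_assoc]

lemma Monovary.mul_add_mul_le_mul_add_mul_of_canonicallyOrderedAdd {ι R : Type*} [Semiring R]
    [LinearOrder R] [CanonicallyOrderedAdd R] [MulPosMono R] [AddLeftMono R] {f g : ι → R}
    (hfg : Monovary f g) (s t : ι) : f s * g t + f t * g s ≤ f s * g s + f t * g t := by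
  rcases lt_trichotomy (g s) (g t) with h | h | h
  · exact _root_.mul_add_mul_le_mul_add_mul_of_canonicallyOrderedAdd (hfg h) h.le
  · rw [h]
  · rw [add_comm (f s * g t), add_comm (f s * g s)]
    exact _root_.mul_add_mul_le_mul_add_mul_of_canonicallyOrderedAdd (hfg h) h.le

theorem Monovary.lintegral_mul_lintegral_le_lintegral_mul {α : Type*} [MeasurableSpace α]
    (μ : Measure α) [IsProbabilityMeasure μ] {f g : α → ℝ≥0∞} (hfg : Monovary f g)
    (hf : Measurable f) (hg : Measurable g) :
    (∫⁻ t, f t ∂μ) * ∫⁻ t, g t ∂μ ≤ ∫⁻ t, f t * g t ∂μ := by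
  set I := ∫⁻ t, f t ∂μ
  set J := ∫⁻ t, g t ∂μ
  set K := ∫⁻ t, f t * g t ∂μ
  have inner (s : α) : f s * J + I * g s ≤ f s * g s + K := calc
    f s * J + I * g s = ∫⁻ t, (f s * g t + f t * g s) ∂μ := by
      rw [lintegral_add_left (hg.const_mul _), lintegral_const_mul _ hg, lintegral_mul_const _ hf]
    _ ≤ ∫⁻ t, (f s * g s + f t * g t) ∂μ :=
      lintegral_mono fun t => hfg.mul_add_mul_le_mul_add_mul_of_canonicallyOrderedAdd s t
    _ = f s * g s + K := by
      rw [lintegral_add_left measurable_const, lintegral_const, measure_univ, mul_one]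
  have outer : 2 * (I * J) ≤ 2 * K := calc
    2 * (I * J) = ∫⁻ s, (f s * J + I * g s) ∂μ := by
      rw [two_mul, lintegral_add_left (hf.mul_const _), lintegral_mul_const _ hf,
        lintegral_const_mul _ hg]
    _ ≤ ∫⁻ s, (f s * g s + K) ∂μ := lintegral_mono inner
    _ = 2 * K := by
      rw [lintegral_add_right _ measurable_const, lintegral_const, measure_univ, mul_one, two_mul]
  exact (ENNReal.mul_le_mul_iff_right two_ne_zero ENNReal.ofNat_ne_top).mp outer

section WinEvent

variable {V : Type*}

def winEvent (x : V) (c : V → ℝ) : Set (V → ℝ) := {u | ∀ v, v ≠ x → u v < u x + c v}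

lemma setOf_forall_add_lt_add_eq_winEvent (l : V → ℝ) (x : V) :
    {u : V → ℝ | ∀ v, v ≠ x → l v + u v < l x + u x} = winEvent x (fun v => l x - l v) := by
  ext u
  refine forall₂_congr fun v _ => ?_
  constructor <;> intro h <;> linarith

lemma winEvent_inter_winEvent (x : V) (a b : V → ℝ) :
    winEvent x a ∩ winEvent x b = winEvent x (a ⊓ b) := by
  ext u
  simp only [winEvent, mem_inter_iff, mem_ofPred_eq, Pi.inf_apply, ← min_add_add_left, lt_min_iff,
    ← forall_and]

lemma monotone_prod_measure_Iio_add {ι : Type*} (μ : Measure ℝ) (s : Finset ι) (c : ι → ℝ) :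
    Monotone fun t => ∏ v ∈ s, μ (Iio (t + c v)) :=
  fun _ _ hst => Finset.prod_le_prod' fun v _ => measure_mono (Iio_subset_Iio (by linarith))

lemma measure_pi_winEvent [Fintype V] [DecidableEq V] (μ : Measure ℝ) [SigmaFinite μ] (x : V)
    (c : V → ℝ) :
    Measure.pi (fun _ : V => μ) (winEvent x c)
      = ∫⁻ t, ∏ v ∈ Finset.univ.erase x, μ (Iio (t + c v)) ∂μ := by
  let : Unique {v : V // v = x} := ⟨⟨⟨x, rfl⟩⟩, fun v => Subtype.ext v.2⟩
  set T : Set (({v : V // v = x} → ℝ) × ({v : V // ¬ v = x} → ℝ)) :=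
    {p | p.2 ∈ Set.pi univ fun w => Iio (p.1 default + c w.1)}
  have hT : MeasurableSet T := by
    simp only [T, Set.mem_pi, mem_univ, mem_Iio, true_implies, ofPred_forall]
    exact MeasurableSet.iInter fun w => measurableSet_lt (by fun_prop) (by fun_prop)
  have hpre : MeasurableEquiv.piEquivPiSubtypeProd (fun _ : V => ℝ) (· = x) ⁻¹' T
      = winEvent x c :=
    ext fun u => ⟨fun h v hv => h ⟨v, hv⟩ trivial, fun h w _ => h w w.2⟩
  rw [← hpre, (measurePreserving_piEquivPiSubtypeProd (fun _ : V => μ) (· = x)).measure_preimage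
    hT.nullMeasurableSet, Measure.prod_apply hT]
  simp only [T, preimage_ofPred_eq, ofPred_mem_eq, Measure.pi_pi]
  have hprod (t : ℝ) : ∏ v ∈ Finset.univ.erase x, μ (Iio (t + c v))
      = ∏ w : {v : V // ¬ v = x}, μ (Iio (t + c w)) :=
    Finset.prod_subtype _ (by simp) _
  simp only [hprod]
  -- `convert` reconciles the two `Fintype` instances on the singleton subtype
  convert (measurePreserving_funUnique μ {v : V // v = x}).lintegral_comp
    (monotone_prod_measure_Iio_add μ _ _).measurable using 3
  rfl

lemma measure_Iio_mul_measure_Iio_le (μ : Measure ℝ) [IsProbabilityMeasure μ] (p q : ℝ) :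
    μ (Iio p) * μ (Iio q) ≤ μ (Iio (p ⊓ q)) := by
  rcases le_total p q with h | h
  · rw [inf_eq_left.mpr h]
    exact mul_le_of_le_one_right' prob_le_one
  · rw [inf_eq_right.mpr h]
    exact mul_le_of_le_one_left' prob_le_one

theorem measure_pi_winEvent_mul_le_inter [Fintype V] (μ : Measure ℝ)
    [IsProbabilityMeasure μ] (x : V) (a b : V → ℝ) :
    Measure.pi (fun _ : V => μ) (winEvent x a) * Measure.pi (fun _ : V => μ) (winEvent x b)
      ≤ Measure.pi (fun _ : V => μ) (winEvent x a ∩ winEvent x b) := by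
  classical
  simp only [winEvent_inter_winEvent, measure_pi_winEvent]
  have ha := monotone_prod_measure_Iio_add μ (Finset.univ.erase x) a
  have hb := monotone_prod_measure_Iio_add μ (Finset.univ.erase x) b
  refine (ha.monovary hb).lintegral_mul_lintegral_le_lintegral_mul μ ha.measurable hb.measurable
    |>.trans (lintegral_mono fun t => ?_)
  rw [← Finset.prod_mul_distrib]
  refine Finset.prod_le_prod' fun v _ => ?_
  simpa only [Pi.inf_apply, ← min_add_add_left] using
    measure_Iio_mul_measure_Iio_le μ (t + a v) (t + b v)

end WinEvent

theorem gumbel_max_counterfactual_bias_general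
    {V : Type*} [Fintype V] (l l' : V → ℝ) (x : V)
    (hpos : Measure.pi (fun _ : V => gumbelMeasure)
        {u : V → ℝ | ∀ v, v ≠ x → l v + u v < l x + u x} ≠ 0) :
    Measure.pi (fun _ : V => gumbelMeasure)
        ({u : V → ℝ | ∀ v, v ≠ x → l' v + u v < l' x + u x} ∩
         {u : V → ℝ | ∀ v, v ≠ x → l v + u v < l x + u x}) /
      Measure.pi (fun _ : V => gumbelMeasure)
        {u : V → ℝ | ∀ v, v ≠ x → l v + u v < l x + u x}
    ≥ Measure.pi (fun _ : V => gumbelMeasure)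
        {u : V → ℝ | ∀ v, v ≠ x → l' v + u v < l' x + u x} := by
  simp only [setOf_forall_add_lt_add_eq_winEvent] at hpos ⊢
  rw [ge_iff_le, ENNReal.le_div_iff_mul_le (Or.inl hpos) (Or.inl (measure_ne_top _ _))]
  exact measure_pi_winEvent_mul_le_inter gumbelMeasure x _ _

/-- Gumbel-max counterfactuals never decrease the probability of the observed
token: conditioning on the factual outcome X = x (logits λ) makes the event
that the counterfactual logits λ' also select x at least as likely as it is
interventionally. -/
theorem gumbel_max_counterfactual_bias
    {V : Type*} [Fintype V] (l l' : V → ℝ) (x : V)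
    (hcard : 2 ≤ Fintype.card V)
    (hpos : Measure.pi (fun _ : V => gumbelMeasure)
        {u : V → ℝ | ∀ v, v ≠ x → l v + u v < l x + u x} ≠ 0) :
    Measure.pi (fun _ : V => gumbelMeasure)
        ({u : V → ℝ | ∀ v, v ≠ x → l' v + u v < l' x + u x} ∩
         {u : V → ℝ | ∀ v, v ≠ x → l v + u v < l x + u x}) /
      Measure.pi (fun _ : V => gumbelMeasure)
        {u : V → ℝ | ∀ v, v ≠ x → l v + u v < l x + u x}
    ≥ Measure.pi (fun _ : V => gumbelMeasure)
        {u : V → ℝ | ∀ v, v ≠ x → l' v + u v < l' x + u x} :=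
  gumbel_max_counterfactual_bias_general l l' x hpos
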